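/- arXiv:2603.22204 — 2 statements merged into one kernel-verified Lean document; each statement's English description precedes it below -/
import Mathlib

section
/- Let B be a k-ply finite family of n closed balls in ℝ^d (d ≥ 1). Then the intersection graph G(B) has at most 3^d · k · n edges. -/
open Metric SimpleGraph

/-- The intersection graph of a family of sets: distinct indices `i, j` are adjacent
iff `S i` and `S j` intersect. -/
def interGraph {V α : Type*} (S : V → Set α) : SimpleGraph V where
  Adj i j := i ≠ j ∧ (S i ∩ S j).Nonempty
  symm := by
    constructor
    rintro i j ⟨hij, x, hx1, hx2⟩
    exact ⟨hij.symm, x, hx2, hx1⟩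
  loopless := by
    constructor
    rintro i ⟨h, -⟩
    exact h rfl

/-- `X` is a `c`-balanced separator of `G`: every connected component of the induced
subgraph on the complement of `X` has at most `c * |V|` vertices. -/
def IsCBalSep {V : Type*} (G : SimpleGraph V) (c : ℝ) (X : Set V) : Prop :=
  ∀ v : ↥(Xᶜ), (Nat.card {w : ↥(Xᶜ) // (G.induce (Xᶜ)).Reachable v w} : ℝ) ≤ c * (Nat.card V : ℝ)

/-- A balanced separator: every connected component of the induced subgraph on the
complement of `X` has at most `(2/3) * |V|` vertices. -/
def IsBalancedSep {V : Type*} (G : SimpleGraph V) (X : Set V) : Prop :=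
  IsCBalSep G (2/3) X

/-- A closed ball in `ℝ^d` with positive radius. -/
def IsClosedBallIn (d : ℕ) (S : Set (EuclideanSpace ℝ (Fin d))) : Prop :=
  ∃ (c : EuclideanSpace ℝ (Fin d)) (r : ℝ), 0 < r ∧ S = Metric.closedBall c r

/-!
Order the balls by radius and charge every edge to its endpoint of smaller radius. If the ball
`B(c, r)` meets a ball of radius at least `r`, the latter contains a ball of radius `r` inside
`B(c, 3r)`. These small balls are again `k`-ply, so comparing volumes shows there are at most
`3^d k` of them; hence every ball is charged at most `3^d k` times.
-/

open Finset MeasureTheory Module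
open scoped Pointwise

theorem SimpleGraph.ncard_edgeSet_le_sum_ncard {V α : Type*} [Fintype V] [LinearOrder α]
    (G : SimpleGraph V) (f : V → α) :
    G.edgeSet.ncard ≤ ∑ v, {w | G.Adj v w ∧ f v ≤ f w}.ncard := by
  classical
  rw [← G.coe_edgeFinset, Set.ncard_coe_finset]
  simp only [Set.ncard_eq_toFinset_card', Set.toFinset_ofPred]
  rw [← card_sigma]
  refine card_le_card_of_surjOn (fun p => s(p.1, p.2)) ?_
  intro e he
  induction e using Sym2.ind with
  | _ v w =>
    rw [coe_edgeFinset, mem_edgeSet] at he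
    rcases le_total (f v) (f w) with h | h
    · exact ⟨⟨v, w⟩, by simp [he, h], rfl⟩
    · exact ⟨⟨w, v⟩, by simp [he.symm, h], Sym2.eq_swap⟩

theorem exists_closedBall_subset_and_subset_closedBall_three_mul {E : Type*}
    [NormedAddCommGroup E] [NormedSpace ℝ E] [ProperSpace E] {x ci cj : E} {ri rj : ℝ}
    (hri : 0 ≤ ri) (hij : ri ≤ rj)
    (hxi : x ∈ closedBall ci ri) (hxj : x ∈ closedBall cj rj) :
    ∃ c, closedBall c ri ⊆ closedBall cj rj ∧ closedBall c ri ⊆ closedBall ci (3 * ri) := by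
  have hx : x ∈ closedBall cj (rj - ri) + closedBall 0 ri := by
    rwa [closedBall_add_closedBall (by linarith) hri, add_zero, sub_add_cancel]
  obtain ⟨c, hc, v, hv, rfl⟩ := Set.mem_add.mp hx
  refine ⟨c, closedBall_subset_closedBall' ?_, closedBall_subset_closedBall' ?_⟩
  · rw [mem_closedBall] at hc
    linarith
  · rw [mem_closedBall_zero_iff] at hv
    rw [mem_closedBall] at hxi
    linarith [dist_triangle_left c ci (c + v), dist_self_add_left v c]

theorem sum_measure_le_mul_measure_of_ncard_le {α ι : Type*} [MeasurableSpace α]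
    (μ : Measure α) {T : Finset ι} {s : ι → Set α} {U : Set α} {k : ℕ}
    (hs : ∀ j ∈ T, MeasurableSet (s j)) (hsU : ∀ j ∈ T, s j ⊆ U)
    (hk : ∀ x, {j | j ∈ T ∧ x ∈ s j}.ncard ≤ k) :
    ∑ j ∈ T, μ (s j) ≤ k * μ U := by
  classical
  calc ∑ j ∈ T, μ (s j) = ∫⁻ x, ∑ j ∈ T, (s j).indicator 1 x ∂μ := by
        rw [lintegral_finsetSum _ fun j hj => measurable_one.indicator (hs j hj)]
        exact sum_congr rfl fun j hj => (lintegral_indicator_one (hs j hj)).symm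
    _ ≤ ∫⁻ x, U.indicator (fun _ => (k : ENNReal)) x ∂μ := by
        refine lintegral_mono fun x => ?_
        by_cases hx : x ∈ U
        · have hcount :
              ∑ j ∈ T, (s j).indicator 1 x = ({j | j ∈ T ∧ x ∈ s j}.ncard : ENNReal) := by
            simp [Set.indicator_apply, sum_boole, ← Set.ncard_coe_finset]
          rw [hcount, Set.indicator_of_mem hx]
          exact Nat.cast_le.mpr (hk x)
        · rw [sum_eq_zero fun j hj => Set.indicator_of_notMem (fun h => hx (hsU j hj h)) _]
          exact zero_le
    _ ≤ k * μ U := lintegral_indicator_const_le U _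

theorem card_mul_pow_le_of_closedBall_subset {ι E : Type*} [NormedAddCommGroup E]
    [NormedSpace ℝ E] [FiniteDimensional ℝ E] {T : Finset ι} {c : ι → E} {c₀ : E} {r R : ℝ}
    {k : ℕ} (hr : 0 ≤ r) (hR : 0 ≤ R) (hsub : ∀ j ∈ T, closedBall (c j) r ⊆ closedBall c₀ R)
    (hk : ∀ x, {j | j ∈ T ∧ x ∈ closedBall (c j) r}.ncard ≤ k) :
    #T * r ^ finrank ℝ E ≤ k * R ^ finrank ℝ E := by
  borelize E
  set μ : Measure E := Measure.addHaar
  have hμ : ∑ j ∈ T, μ.real (closedBall (c j) r) ≤ k * μ.real (closedBall c₀ R) := by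
    have := ENNReal.toReal_mono
      (ENNReal.mul_ne_top (ENNReal.natCast_ne_top k) measure_closedBall_lt_top.ne)
      (sum_measure_le_mul_measure_of_ncard_le μ (fun j _ => measurableSet_closedBall) hsub hk)
    rwa [ENNReal.toReal_sum fun j _ => measure_closedBall_lt_top.ne, ENNReal.toReal_mul] at this
  simp only [Measure.addHaar_real_closedBall' μ _ hr, Measure.addHaar_real_closedBall' μ _ hR,
    sum_const, nsmul_eq_mul, ← mul_assoc] at hμ
  exact le_of_mul_le_mul_right hμ <|
    ENNReal.toReal_pos (measure_closedBall_pos μ _ one_pos).ne' measure_closedBall_lt_top.ne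

theorem ncard_meeting_larger_closedBalls_le {ι E : Type*} [Finite ι] [NormedAddCommGroup E]
    [NormedSpace ℝ E] [FiniteDimensional ℝ E] {c : ι → E} {r : ι → ℝ} {k : ℕ}
    (hk : ∀ x, {j | x ∈ closedBall (c j) (r j)}.ncard ≤ k) {i : ι} (hri : 0 < r i) :
    {j | (closedBall (c i) (r i) ∩ closedBall (c j) (r j)).Nonempty ∧ r i ≤ r j}.ncard ≤
      3 ^ finrank ℝ E * k := by
  set F := {j | (closedBall (c i) (r i) ∩ closedBall (c j) (r j)).Nonempty ∧ r i ≤ r j}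
  have hsmall : ∀ j, ∃ c', j ∈ F → closedBall c' (r i) ⊆ closedBall (c j) (r j) ∧
      closedBall c' (r i) ⊆ closedBall (c i) (3 * r i) := by
    intro j
    by_cases hj : j ∈ F
    · obtain ⟨⟨x, hxi, hxj⟩, hij⟩ := hj
      obtain ⟨c', hc'⟩ :=
        exists_closedBall_subset_and_subset_closedBall_three_mul hri.le hij hxi hxj
      exact ⟨c', fun _ => hc'⟩
    · exact ⟨c i, fun h => absurd h hj⟩
  choose c' hc' using hsmall
  have hpack := card_mul_pow_le_of_closedBall_subset (T := F.toFinite.toFinset) (c := c') hri.le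
    (by positivity : 0 ≤ 3 * r i) (fun j hj => (hc' j (by simpa using hj)).2) fun x =>
      (Set.ncard_le_ncard fun j hj => (hc' j (by simpa using hj.1)).1 hj.2).trans (hk x)
  rw [← Set.ncard_eq_toFinset_card, mul_pow, mul_left_comm, ← mul_assoc] at hpack
  exact_mod_cast le_of_mul_le_mul_right hpack (pow_pos hri _)

theorem ball_kply_edge_bound_general (d : ℕ) (n k : ℕ)
    (B : Fin n → Set (EuclideanSpace ℝ (Fin d)))
    (hball : ∀ i, IsClosedBallIn d (B i))
    (hply : ∀ x : EuclideanSpace ℝ (Fin d), Set.ncard {j | x ∈ B j} ≤ k) :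
    (interGraph B).edgeSet.ncard ≤ 3 ^ d * k * n := by
  choose c r hr hB using hball
  obtain rfl : B = fun i => closedBall (c i) (r i) := funext hB
  calc (interGraph _).edgeSet.ncard
      ≤ ∑ i, {j | (interGraph _).Adj i j ∧ r i ≤ r j}.ncard := ncard_edgeSet_le_sum_ncard _ r
    _ ≤ ∑ _i : Fin n, 3 ^ d * k := sum_le_sum fun i _ => by
        have hadj : {j | (interGraph fun l => closedBall (c l) (r l)).Adj i j ∧ r i ≤ r j} ⊆
            {j | (closedBall (c i) (r i) ∩ closedBall (c j) (r j)).Nonempty ∧ r i ≤ r j} :=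
          fun j hj => ⟨hj.1.2, hj.2⟩
        simpa using (Set.ncard_le_ncard hadj).trans
          (ncard_meeting_larger_closedBalls_le hply (hr i))
    _ = 3 ^ d * k * n := by simp [mul_comm]

/-- A `k`-ply intersection graph of `n` balls in `ℝ^d` has at most `3^d * k * n` edges. -/
theorem ball_kply_edge_bound (d : ℕ) (hd : 1 ≤ d) (n k : ℕ)
    (B : Fin n → Set (EuclideanSpace ℝ (Fin d)))
    (hball : ∀ i, IsClosedBallIn d (B i))
    (hply : ∀ x : EuclideanSpace ℝ (Fin d), Set.ncard {j | x ∈ B j} ≤ k) :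
    (interGraph B).edgeSet.ncard ≤ 3 ^ d * k * n :=
  ball_kply_edge_bound_general d n k B hball hply
end

section
/- For every dimension d ≥ 3, every ε > 0, and every finite simple graph G, there exists a finite family of compact connected subsets of ℝ^d, each of which is (1+ε)-fat, whose intersection graph is isomorphic to G. -/
/-!
Enumerate the vertices as `0, …, n - 1` and give vertex `j` the closed ball of radius `t ^ j`
centred at `(1 + 4t) t ^ j` on the first axis: the balls shrink geometrically towards the
origin and are pairwise disjoint. For every edge `jk` with `j < k`, the body of `j` grows a
tentacle that leaves ball `j` at height `2 t ^ (j + 1)`, which clears every later (smaller)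
ball, runs horizontally until it is above the centre of ball `k`, and drops into ball `k`.
Tentacles of different vertices run in different lanes (second coordinate `t ^ (n + j)`), so
they never meet, and the intersection graph is exactly `G`. Every tentacle of `j` stays within
`(1 + 7t) t ^ j` of the centre of ball `j`, so taking `t ≤ ε / 7` makes all bodies
`(1 + ε)`-fat. Only three dimensions are used.
-/

open Metric SimpleGraph

/-- A set `B ⊆ ℝ^d` is `C`-fat: for some `r > 0`, `B` contains a closed ball of radius `r`
and is contained in a closed ball of radius `C * r`. -/
def IsFat (d : ℕ) (C : ℝ) (B : Set (EuclideanSpace ℝ (Fin d))) : Prop :=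
  ∃ r : ℝ, 0 < r ∧ (∃ c₁, Metric.closedBall c₁ r ⊆ B) ∧
    ∃ c₂, B ⊆ Metric.closedBall c₂ (C * r)

open Set Function
open scoped RealInnerProductSpace

theorem interGraph_union_iUnion_eq {V α : Type*} {G : SimpleGraph V} {B : V → Set α}
    {T : V → V → Set α} (hB : Pairwise (Disjoint on B))
    (hTB : ∀ v w x, x ≠ v → x ≠ w → Disjoint (T v w) (B x))
    (hTT : ∀ v w v' w', v ≠ v' → Disjoint (T v w) (T v' w'))
    (hG : ∀ v w, v ≠ w → (G.Adj v w ↔ (T v w ∩ B w).Nonempty ∨ (T w v ∩ B v).Nonempty)) :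
    interGraph (fun v => B v ∪ ⋃ w, T v w) = G := by
  ext a b
  constructor
  · rintro ⟨hab, p, hpa, hpb⟩
    rw [hG a b hab]
    simp only [mem_union, mem_iUnion] at hpa hpb
    rcases hpa with hpa | ⟨u, hpa⟩ <;> rcases hpb with hpb | ⟨u', hpb⟩
    · exact (disjoint_left.1 (hB hab) hpa hpb).elim
    · obtain rfl : a = u' := of_not_not fun h => disjoint_left.1 (hTB b u' a hab h) hpb hpa
      exact Or.inr ⟨p, hpb, hpa⟩
    · obtain rfl : b = u := of_not_not fun h => disjoint_left.1 (hTB a u b hab.symm h) hpa hpb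
      exact Or.inl ⟨p, hpa, hpb⟩
    · exact (disjoint_left.1 (hTT a u b u' hab) hpa hpb).elim
  · intro h
    refine ⟨h.ne, ?_⟩
    rcases (hG a b h.ne).1 h with ⟨p, hT, hB⟩ | ⟨p, hT, hB⟩
    · exact ⟨p, Or.inr (mem_iUnion.2 ⟨b, hT⟩), Or.inl hB⟩
    · exact ⟨p, Or.inl hB, Or.inr (mem_iUnion.2 ⟨a, hT⟩)⟩

theorem IsPreconnected.union_iUnion {X : Type*} {ι : Sort*} [TopologicalSpace X] {B : Set X}
    {T : ι → Set X} (hne : B.Nonempty) (hB : IsPreconnected B)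
    (hT : ∀ i, IsPreconnected (B ∪ T i)) : IsPreconnected (B ∪ ⋃ i, T i) := by
  obtain ⟨x, hx⟩ := hne
  have hunion : B ∪ ⋃ i, T i = ⋃₀ insert B (range fun i => B ∪ T i) := by
    ext p
    simp only [mem_union, mem_iUnion, sUnion_insert, sUnion_range]
    constructor
    · rintro (h | ⟨i, h⟩)
      exacts [Or.inl h, Or.inr ⟨i, Or.inr h⟩]
    · rintro (h | ⟨i, h | h⟩)
      exacts [Or.inl h, Or.inl h, Or.inr ⟨i, h⟩]
  rw [hunion]
  refine isPreconnected_sUnion x _ ?_ ?_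
  · simp [hx]
  · simp [hB, hT]

section Coordinates

variable {E ι : Type*} [NormedAddCommGroup E] [InnerProductSpace ℝ E] [Fintype ι] {e : ι → E}

def spanPoint (e : ι → E) (v : ι → ℝ) : E := ∑ i, v i • e i

theorem inner_spanPoint (he : Orthonormal ℝ e) (v : ι → ℝ) (i : ι) :
    ⟪e i, spanPoint e v⟫ = v i :=
  he.inner_right_fintype v i

theorem dist_spanPoint_le (he : ∀ i, ‖e i‖ = 1) (v w : ι → ℝ) :
    dist (spanPoint e v) (spanPoint e w) ≤ ∑ i, |v i - w i| := by
  rw [dist_eq_norm, spanPoint, spanPoint, ← Finset.sum_sub_distrib]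
  refine (norm_sum_le _ _).trans_eq (Finset.sum_congr rfl fun i _ => ?_)
  rw [← sub_smul, norm_smul, he, mul_one, Real.norm_eq_abs]

theorem abs_inner_sub_inner_le_dist {u : E} (hu : ‖u‖ = 1) (p q : E) :
    |⟪u, p⟫ - ⟪u, q⟫| ≤ dist p q := by
  rw [← inner_sub_right, dist_eq_norm]
  simpa [hu] using abs_real_inner_le_norm u (p - q)

theorem inner_mem_uIcc_of_mem_segment (u : E) {a b p : E} (hp : p ∈ segment ℝ a b) :
    ⟪u, p⟫ ∈ uIcc ⟪u, a⟫ ⟪u, b⟫ := by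
  have h := mem_image_of_mem (innerSL ℝ u).toLinearMap.toAffineMap hp
  rw [image_segment, segment_eq_uIcc] at h
  simpa using h

end Coordinates

section LPath

variable {E : Type*} [NormedAddCommGroup E] [InnerProductSpace ℝ E] {e : Fin 3 → E}
  {x₁ x₂ y h : ℝ}

theorem dist_spanPoint_three_le (he : ∀ i, ‖e i‖ = 1) (a b c a' b' c' : ℝ) :
    dist (spanPoint e ![a, b, c]) (spanPoint e ![a', b', c']) ≤
      |a - a'| + |b - b'| + |c - c'| := by
  simpa [Fin.sum_univ_three] using dist_spanPoint_le he ![a, b, c] ![a', b', c']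

def lPath (e : Fin 3 → E) (x₁ x₂ y h : ℝ) : Set E :=
  segment ℝ (spanPoint e ![x₁, y, h]) (spanPoint e ![x₂, y, h]) ∪
    segment ℝ (spanPoint e ![x₂, y, h]) (spanPoint e ![x₂, y, 0])

theorem isCompact_lPath : IsCompact (lPath e x₁ x₂ y h) := by
  simp only [lPath, ← convexHull_pair]
  exact ((toFinite _).isCompact_convexHull ℝ).union ((toFinite _).isCompact_convexHull ℝ)

theorem isPreconnected_lPath : IsPreconnected (lPath e x₁ x₂ y h) :=
  (convex_segment _ _).isPreconnected.union _ (right_mem_segment _ _ _) (left_mem_segment _ _ _)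
    (convex_segment _ _).isPreconnected

theorem start_mem_lPath : spanPoint e ![x₁, y, h] ∈ lPath e x₁ x₂ y h :=
  Or.inl (left_mem_segment _ _ _)

theorem end_mem_lPath : spanPoint e ![x₂, y, 0] ∈ lPath e x₁ x₂ y h :=
  Or.inr (right_mem_segment _ _ _)

theorem lPath_subset {s : Set E} (hs : Convex ℝ s) (h₁ : spanPoint e ![x₁, y, h] ∈ s)
    (h₂ : spanPoint e ![x₂, y, h] ∈ s) (h₃ : spanPoint e ![x₂, y, 0] ∈ s) :
    lPath e x₁ x₂ y h ⊆ s :=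
  union_subset (hs.segment_subset h₁ h₂) (hs.segment_subset h₂ h₃)

theorem inner_eq_of_mem_lPath (he : Orthonormal ℝ e) {p : E} (hp : p ∈ lPath e x₁ x₂ y h) :
    ⟪e 1, p⟫ = y ∧ ((⟪e 0, p⟫ ∈ uIcc x₁ x₂ ∧ ⟪e 2, p⟫ = h) ∨ ⟪e 0, p⟫ = x₂) := by
  have coord (i : Fin 3) {a b : Fin 3 → ℝ} (hp : p ∈ segment ℝ (spanPoint e a) (spanPoint e b)) :
      ⟪e i, p⟫ ∈ uIcc (a i) (b i) := by
    simpa only [inner_spanPoint he] using inner_mem_uIcc_of_mem_segment (e i) hp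
  rcases hp with hp | hp
  · have h0 := coord 0 hp
    have h1 := coord 1 hp
    have h2 := coord 2 hp
    simp_all
  · have h0 := coord 0 hp
    have h1 := coord 1 hp
    simp_all

end LPath

namespace GraphRealization

section Configuration

variable {E : Type*} [NormedAddCommGroup E] [InnerProductSpace ℝ E] {e : Fin 3 → E}
  {t : ℝ} {N a b j k m : ℕ}

def centerCoord (t : ℝ) (j : ℕ) : ℝ := (1 + 4 * t) * t ^ j

def ballCenter (e : Fin 3 → E) (t : ℝ) (j : ℕ) : E := spanPoint e ![centerCoord t j, 0, 0]

def tentacle (e : Fin 3 → E) (t : ℝ) (N j k : ℕ) : Set E :=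
  lPath e (centerCoord t j) (centerCoord t k) (t ^ (N + j)) (2 * t ^ (j + 1))

theorem dist_ballCenter_le (he : ∀ i, ‖e i‖ = 1) (a b c : ℝ) (j : ℕ) :
    dist (spanPoint e ![a, b, c]) (ballCenter e t j) ≤ |a - centerCoord t j| + |b| + |c| := by
  simpa [ballCenter] using dist_spanPoint_three_le he a b c (centerCoord t j) 0 0

theorem centerCoord_antitone (ht0 : 0 ≤ t) (ht1 : t ≤ 1) : Antitone (centerCoord t) :=
  fun _ _ hab => mul_le_mul_of_nonneg_left (pow_le_pow_of_le_one ht0 ht1 hab) (by linarith)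

variable (ht0 : 0 < t) (ht : t ≤ 1 / 4)
include ht0 ht

theorem pow_add_pow_lt_centerCoord_sub (hab : a < b) :
    t ^ a + t ^ b < centerCoord t a - centerCoord t b := by
  have hb : t ^ b ≤ t * t ^ a := by
    rw [← pow_succ']
    exact pow_le_pow_of_le_one ht0.le (by linarith) hab
  have hta : 0 < t * t ^ a := mul_pos ht0 (pow_pos ht0 a)
  unfold centerCoord
  nlinarith

theorem pow_add_pow_lt_abs_centerCoord_sub (hab : a ≠ b) :
    t ^ a + t ^ b < |centerCoord t a - centerCoord t b| := by
  rcases hab.lt_or_gt with h | h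
  · exact (pow_add_pow_lt_centerCoord_sub ht0 ht h).trans_le (le_abs_self _)
  · rw [abs_sub_comm, add_comm]
    exact (pow_add_pow_lt_centerCoord_sub ht0 ht h).trans_le (le_abs_self _)

theorem disjoint_closedBall_ballCenter (he : Orthonormal ℝ e) (hab : a ≠ b) :
    Disjoint (closedBall (ballCenter e t a) (t ^ a)) (closedBall (ballCenter e t b) (t ^ b)) := by
  refine closedBall_disjoint_closedBall
    ((pow_add_pow_lt_abs_centerCoord_sub ht0 ht hab).trans_le ?_)
  simpa [ballCenter, inner_spanPoint he] using
    abs_inner_sub_inner_le_dist (he.1 0) (ballCenter e t a) (ballCenter e t b)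

theorem isPreconnected_closedBall_union_tentacle (he : ∀ i, ‖e i‖ = 1) (hN : 0 < N) :
    IsPreconnected (closedBall (ballCenter e t j) (t ^ j) ∪ tentacle e t N j k) := by
  refine (convex_closedBall _ _).isPreconnected.union _ ?_ start_mem_lPath isPreconnected_lPath
  have hy : t ^ (N + j) ≤ t ^ (j + 1) := pow_le_pow_of_le_one ht0.le (by linarith) (by omega)
  have hh : 0 < 2 * t ^ (j + 1) := by positivity
  refine mem_closedBall.2 ((dist_ballCenter_le he _ _ _ j).trans ?_)
  rw [sub_self, abs_zero, zero_add, abs_of_pos (pow_pos ht0 _), abs_of_pos hh]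
  nlinarith [pow_succ t j, pow_pos ht0 j]

theorem tentacle_inter_closedBall_nonempty (he : ∀ i, ‖e i‖ = 1) (hk : k ≤ N + j) :
    (tentacle e t N j k ∩ closedBall (ballCenter e t k) (t ^ k)).Nonempty := by
  refine ⟨_, end_mem_lPath, mem_closedBall.2 ((dist_ballCenter_le he _ _ _ k).trans ?_)⟩
  rw [sub_self, abs_zero, zero_add, add_zero, abs_of_pos (pow_pos ht0 _)]
  exact pow_le_pow_of_le_one ht0.le (by linarith) hk

theorem disjoint_tentacle_closedBall (he : Orthonormal ℝ e) (hjk : j ≤ k) (hmj : m ≠ j)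
    (hmk : m ≠ k) : Disjoint (tentacle e t N j k) (closedBall (ballCenter e t m) (t ^ m)) := by
  refine disjoint_left.2 fun p hp hpm => (mem_closedBall.1 hpm).not_gt ?_
  have hdist₀ : |⟪e 0, p⟫ - centerCoord t m| ≤ dist p (ballCenter e t m) := by
    simpa [ballCenter, inner_spanPoint he] using
      abs_inner_sub_inner_le_dist (he.1 0) p (ballCenter e t m)
  have hdist₂ : |⟪e 2, p⟫| ≤ dist p (ballCenter e t m) := by
    simpa [ballCenter, inner_spanPoint he] using
      abs_inner_sub_inner_le_dist (he.1 2) p (ballCenter e t m)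
  rcases (inner_eq_of_mem_lPath he hp).2 with ⟨hx, hz⟩ | hx
  · rcases hmj.lt_or_gt with hmj | hmj
    · rw [uIcc_of_ge (centerCoord_antitone ht0.le (by linarith) hjk)] at hx
      have := pow_add_pow_lt_centerCoord_sub ht0 ht hmj
      refine (lt_of_lt_of_le ?_ (neg_le_abs _)).trans_le hdist₀
      linarith [hx.2, pow_pos ht0 j]
    · -- the horizontal part of the tentacle runs above every later ball
      have : t ^ m ≤ t ^ (j + 1) := pow_le_pow_of_le_one ht0.le (by linarith) hmj
      refine (lt_of_lt_of_le ?_ (le_abs_self _)).trans_le hdist₂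
      linarith [pow_pos ht0 (j + 1)]
  · refine lt_of_lt_of_le ?_ hdist₀
    rw [hx, abs_sub_comm]
    linarith [pow_add_pow_lt_abs_centerCoord_sub ht0 ht hmk, pow_pos ht0 k]

theorem tentacle_subset_closedBall (he : ∀ i, ‖e i‖ = 1) (hjk : j ≤ k) (hN : 0 < N) :
    tentacle e t N j k ⊆ closedBall (ballCenter e t j) ((1 + 7 * t) * t ^ j) := by
  have hx (k' : ℕ) (hk' : j ≤ k') :
      |centerCoord t k' - centerCoord t j| ≤ (1 + 4 * t) * t ^ j := by
    have := centerCoord_antitone ht0.le (by linarith) hk'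
    have : 0 ≤ centerCoord t k' := by unfold centerCoord; positivity
    have : 0 ≤ (1 + 4 * t) * t ^ j := by positivity
    exact abs_sub_le_iff.2 ⟨by linarith, by unfold centerCoord at *; linarith⟩
  have hy : t ^ (N + j) ≤ t ^ (j + 1) := pow_le_pow_of_le_one ht0.le (by linarith) (by omega)
  have htj := pow_pos ht0 j
  refine lPath_subset (convex_closedBall _ _) ?_ ?_ ?_ <;>
  · refine mem_closedBall.2 ((dist_ballCenter_le he _ _ _ j).trans ?_)
    rw [abs_of_pos (pow_pos ht0 _)]
    nlinarith [hx j le_rfl, hx k hjk, abs_zero (α := ℝ), pow_succ t j,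
      abs_of_pos (by positivity : (0 : ℝ) < 2 * t ^ (j + 1))]

theorem disjoint_tentacle_tentacle (he : Orthonormal ℝ e) {j' k' : ℕ} (hj : j ≠ j') :
    Disjoint (tentacle e t N j k) (tentacle e t N j' k') :=
  disjoint_left.2 fun _ hp hp' => hj <| Nat.add_left_cancel <|
    pow_right_injective₀ ht0 (by linarith) <|
      (inner_eq_of_mem_lPath he hp).1.symm.trans (inner_eq_of_mem_lPath he hp').1

end Configuration

section Body

variable {E V : Type*} [NormedAddCommGroup E] [InnerProductSpace ℝ E] {e : Fin 3 → E} {t : ℝ}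
  {N : ℕ} {G : SimpleGraph V} {idx : V → ℕ}

def body (e : Fin 3 → E) (t : ℝ) (N : ℕ) (G : SimpleGraph V) (idx : V → ℕ) (v : V) : Set E :=
  closedBall (ballCenter e t (idx v)) (t ^ idx v) ∪
    ⋃ w, ⋃ (_ : G.Adj v w ∧ idx v < idx w), tentacle e t N (idx v) (idx w)

theorem isCompact_body [ProperSpace E] [Finite V] (v : V) : IsCompact (body e t N G idx v) :=
  (isCompact_closedBall _ _).union
    (isCompact_iUnion fun _ => isCompact_iUnion fun _ => isCompact_lPath)

theorem closedBall_subset_body (v : V) :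
    closedBall (ballCenter e t (idx v)) (t ^ idx v) ⊆ body e t N G idx v :=
  subset_union_left

variable (ht0 : 0 < t) (ht : t ≤ 1 / 4) (hN : ∀ v, idx v < N)
include ht0 ht hN

theorem isConnected_body (he : ∀ i, ‖e i‖ = 1) (v : V) : IsConnected (body e t N G idx v) := by
  have hne : (closedBall (ballCenter e t (idx v)) (t ^ idx v)).Nonempty :=
    ⟨_, mem_closedBall_self (pow_pos ht0 _).le⟩
  have hB := (convex_closedBall (ballCenter e t (idx v)) (t ^ idx v)).isPreconnected
  refine ⟨hne.mono (closedBall_subset_body v), hB.union_iUnion hne fun w => ?_⟩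
  exact hB.union_iUnion hne fun _ =>
    isPreconnected_closedBall_union_tentacle ht0 ht he (Nat.zero_lt_of_lt (hN v))

theorem body_subset_closedBall (he : ∀ i, ‖e i‖ = 1) (v : V) :
    body e t N G idx v ⊆ closedBall (ballCenter e t (idx v)) ((1 + 7 * t) * t ^ idx v) := by
  refine union_subset (closedBall_subset_closedBall ?_) (iUnion₂_subset fun w hw => ?_)
  · nlinarith [pow_pos ht0 (idx v)]
  · exact tentacle_subset_closedBall ht0 ht he hw.2.le (Nat.zero_lt_of_lt (hN v))

theorem interGraph_body (he : Orthonormal ℝ e) (hidx : Injective idx) :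
    interGraph (body e t N G idx) = G := by
  have hT (a b : V) (hab : G.Adj a b ∧ idx a < idx b) :
      ((⋃ (_ : G.Adj a b ∧ idx a < idx b), tentacle e t N (idx a) (idx b)) ∩
        closedBall (ballCenter e t (idx b)) (t ^ idx b)).Nonempty :=
    (tentacle_inter_closedBall_nonempty ht0 ht he.1 ((hN b).le.trans (Nat.le_add_right _ _))).mono
      (inter_subset_inter_left _ (subset_iUnion_of_subset hab subset_rfl))
  refine interGraph_union_iUnion_eq
    (fun a b hab => disjoint_closedBall_ballCenter ht0 ht he (hidx.ne hab))
    (fun v w x hxv hxw => disjoint_iUnion_left.2 fun h =>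
      disjoint_tentacle_closedBall ht0 ht he h.2.le (hidx.ne hxv) (hidx.ne hxw))
    (fun v w v' w' hv => disjoint_iUnion_left.2 fun _ => disjoint_iUnion_right.2 fun _ =>
      disjoint_tentacle_tentacle ht0 ht he (hidx.ne hv))
    fun v w hvw => ⟨fun hadj => ?_, ?_⟩
  · rcases (hidx.ne hvw).lt_or_gt with h | h
    exacts [Or.inl (hT v w ⟨hadj, h⟩), Or.inr (hT w v ⟨hadj.symm, h⟩)]
  · rintro (⟨p, hp, -⟩ | ⟨p, hp, -⟩)
    exacts [(mem_iUnion.1 hp).1.1, (mem_iUnion.1 hp).1.1.symm]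

end Body

end GraphRealization

open GraphRealization

/-- For `d ≥ 3`, every finite graph is the intersection graph of a family of
`(1+ε)`-fat compact connected bodies in `ℝ^d`. -/
theorem any_graph_fat_non_convex (d : ℕ) (hd : 3 ≤ d) (ε : ℝ) (hε : 0 < ε)
    (V : Type) [Fintype V] (G : SimpleGraph V) :
    ∃ S : V → Set (EuclideanSpace ℝ (Fin d)),
      (∀ i, IsCompact (S i) ∧ IsConnected (S i) ∧ IsFat d (1 + ε) (S i)) ∧
      Nonempty (interGraph S ≃g G) := by
  set t := min (ε / 7) (1 / 4)
  have ht0 : 0 < t := lt_min (by positivity) (by norm_num)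
  have ht : t ≤ 1 / 4 := min_le_right _ _
  have htε : 1 + 7 * t ≤ 1 + ε := by linarith [min_le_left (ε / 7) (1 / 4)]
  set e : Fin 3 → EuclideanSpace ℝ (Fin d) := fun i =>
    EuclideanSpace.single (Fin.castLE hd i) 1
  have he : Orthonormal ℝ e := EuclideanSpace.orthonormal_single.comp _ (Fin.castLE_injective hd)
  set idx : V → ℕ := fun v => Fintype.equivFin V v
  have hidx : Injective idx := Fin.val_injective.comp (Fintype.equivFin V).injective
  have hN (v : V) : idx v < Fintype.card V := (Fintype.equivFin V v).isLt
  refine ⟨body e t (Fintype.card V) G idx, fun v => ⟨isCompact_body v,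
    isConnected_body ht0 ht hN he.1 v, ?_⟩, ⟨interGraph_body ht0 ht hN he hidx ▸ Iso.refl⟩⟩
  refine ⟨t ^ idx v, pow_pos ht0 _, ⟨_, closedBall_subset_body v⟩, _,
    (body_subset_closedBall ht0 ht hN he.1 v).trans (closedBall_subset_closedBall ?_)⟩
  exact mul_le_mul_of_nonneg_right htε (pow_pos ht0 _).le
end
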